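/- Let A ∈ ℝ^{m×n}, b ∈ ℝ^m, λ > 0, and suppose x̂ ∈ ℝⁿ is a solution of the SR-LASSO with Ax̂ ≠ b. Then every solution x̄ of the SR-LASSO satisfies b − Ax̄ = ‖Ax̄ − b‖₂ · (b − Ax̂)/‖Ax̂ − b‖₂; in particular, any two solutions with nonzero residual have the same normalized residual (b − Ax)/‖Ax − b‖₂. -/

import Mathlib

open Matrix Filter Topology
open scoped BigOperators Classical

noncomputable def l2 {k : ℕ} (x : Fin k → ℝ) : ℝ := Real.sqrt (∑ i, (x i) ^ 2)

noncomputable def l1 {k : ℕ} (x : Fin k → ℝ) : ℝ := ∑ i, |x i|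

noncomputable def linf {k : ℕ} (x : Fin k → ℝ) : ℝ := sSup (Set.range fun i => |x i|)

noncomputable def dotp {k : ℕ} (x y : Fin k → ℝ) : ℝ := ∑ i, x i * y i

noncomputable def pinv {m s : ℕ} (M : Matrix (Fin m) (Fin s) ℝ) :
    Matrix (Fin s) (Fin m) ℝ := (Mᵀ * M)⁻¹ * Mᵀ

/-- The SR-LASSO objective f_{A,b,λ}(x) := ‖Ax − b‖₂ + λ‖x‖₁. -/
noncomputable def srObj {m n : ℕ} (A : Matrix (Fin m) (Fin n) ℝ) (b : Fin m → ℝ)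
    (lam : ℝ) (x : Fin n → ℝ) : ℝ := l2 (A.mulVec x - b) + lam * l1 x

/-- x is a solution of the SR-LASSO with data (A, b, λ). -/
def IsSol {m n : ℕ} (A : Matrix (Fin m) (Fin n) ℝ) (b : Fin m → ℝ) (lam : ℝ)
    (x : Fin n → ℝ) : Prop := ∀ w : Fin n → ℝ, srObj A b lam x ≤ srObj A b lam w

/-- y is feasible for the SR-LASSO dual: ‖Aᵀy‖_∞ ≤ λ and ‖y‖₂ ≤ 1. -/
noncomputable def DualFeas {m n : ℕ} (A : Matrix (Fin m) (Fin n) ℝ) (lam : ℝ)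
    (y : Fin m → ℝ) : Prop := linf (Aᵀ.mulVec y) ≤ lam ∧ l2 y ≤ 1

/-- y is a solution of the SR-LASSO dual: it is feasible and maximizes ⟨b, ·⟩
over the feasible set. -/
noncomputable def IsDualSol {m n : ℕ} (A : Matrix (Fin m) (Fin n) ℝ) (b : Fin m → ℝ)
    (lam : ℝ) (y : Fin m → ℝ) : Prop :=
  DualFeas A lam y ∧ ∀ y' : Fin m → ℝ, DualFeas A lam y' → dotp b y' ≤ dotp b y

/-! Let `u = Ax̂ − b` and `v = Ax̄ − b`. Both solutions have the optimal value `f*`, and the midpoint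
of `x̂` and `x̄` has residual `(u + v)/2`, so `f* ≤ f(midpoint)` together with the triangle inequality
for `‖·‖₁` gives `‖u‖₂ + ‖v‖₂ ≤ ‖u + v‖₂`. Equality in the triangle inequality of the strictly
convex Euclidean norm puts `u` and `v` on the same ray, `‖u‖₂ v = ‖v‖₂ u`, and dividing by
`‖u‖₂ ≠ 0` gives the claim. -/

section Norms

variable {k : ℕ}

lemma l2_eq_norm_toLp (x : Fin k → ℝ) : l2 x = ‖WithLp.toLp 2 x‖ := by
  simp [l2, EuclideanSpace.norm_eq, sq_abs]

lemma l2_ne_zero {x : Fin k → ℝ} (hx : x ≠ 0) : l2 x ≠ 0 := by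
  simpa [l2_eq_norm_toLp] using hx

lemma l2_smul (c : ℝ) (x : Fin k → ℝ) : l2 (c • x) = |c| * l2 x := by
  simp only [l2_eq_norm_toLp, WithLp.toLp_smul, norm_smul, Real.norm_eq_abs]

lemma l2_add_le (x y : Fin k → ℝ) : l2 (x + y) ≤ l2 x + l2 y := by
  simpa only [l2_eq_norm_toLp, WithLp.toLp_add] using norm_add_le _ _

lemma l2_smul_eq_smul_of_l2_add_eq {x y : Fin k → ℝ} (h : l2 (x + y) = l2 x + l2 y) :
    l2 x • y = l2 y • x := by
  simp only [l2_eq_norm_toLp, WithLp.toLp_add] at h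
  have hray := (sameRay_iff_norm_add.mpr h).norm_smul_eq
  rw [l2_eq_norm_toLp, l2_eq_norm_toLp]
  exact WithLp.toLp_injective 2 (by simpa only [WithLp.toLp_smul] using hray)

lemma l1_smul (c : ℝ) (x : Fin k → ℝ) : l1 (c • x) = |c| * l1 x := by
  simp [l1, abs_mul, Finset.mul_sum]

lemma l1_add_le (x y : Fin k → ℝ) : l1 (x + y) ≤ l1 x + l1 y := by
  simp only [l1, Pi.add_apply, ← Finset.sum_add_distrib]
  exact Finset.sum_le_sum fun i _ => abs_add_le _ _

end Norms

section SRLasso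

variable {m n : ℕ} {A : Matrix (Fin m) (Fin n) ℝ} {b : Fin m → ℝ} {lam : ℝ}

lemma two_mul_srObj_midpoint_le (hlam : 0 ≤ lam) (x y : Fin n → ℝ) :
    2 * srObj A b lam ((2 : ℝ)⁻¹ • (x + y))
      ≤ l2 (A *ᵥ x - b + (A *ᵥ y - b)) + lam * (l1 x + l1 y) := by
  have hres : A *ᵥ ((2 : ℝ)⁻¹ • (x + y)) - b = (2 : ℝ)⁻¹ • (A *ᵥ x - b + (A *ᵥ y - b)) := by
    rw [mulVec_smul, mulVec_add]
    module
  have hl1 : l1 ((2 : ℝ)⁻¹ • (x + y)) ≤ 2⁻¹ * (l1 x + l1 y) := by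
    rw [l1_smul, abs_of_pos (by norm_num)]
    gcongr
    exact l1_add_le x y
  rw [srObj, hres, l2_smul, abs_of_pos (by norm_num)]
  linarith [mul_le_mul_of_nonneg_left hl1 hlam]

lemma IsSol.l2_add_residual_eq (hlam : 0 ≤ lam) {x y : Fin n → ℝ} (hx : IsSol A b lam x)
    (hy : IsSol A b lam y) :
    l2 (A *ᵥ x - b + (A *ᵥ y - b)) = l2 (A *ᵥ x - b) + l2 (A *ᵥ y - b) := by
  refine le_antisymm (l2_add_le _ _) ?_
  have hmid := hx ((2 : ℝ)⁻¹ • (x + y))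
  have hxy := hx y
  have hyx := hy x
  have hconv := two_mul_srObj_midpoint_le (A := A) (b := b) hlam x y
  simp only [srObj] at hmid hxy hyx hconv
  linarith

end SRLasso

/-- invariance of the normalized residual: if x̂ solves the
SR-LASSO with Ax̂ ≠ b, then every solution x̄ satisfies
b − Ax̄ = ‖Ax̄ − b‖₂ · (b − Ax̂)/‖Ax̂ − b‖₂. -/
theorem stmt_7 {m n : ℕ} (A : Matrix (Fin m) (Fin n) ℝ) (b : Fin m → ℝ)
    (lam : ℝ) (hlam : 0 < lam) (xhat : Fin n → ℝ)
    (hsol : IsSol A b lam xhat) (hres : A.mulVec xhat ≠ b) :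
    ∀ xbar : Fin n → ℝ, IsSol A b lam xbar →
      b - A.mulVec xbar
        = l2 (A.mulVec xbar - b) •
            ((l2 (A.mulVec xhat - b))⁻¹ • (b - A.mulVec xhat)) := by
  intro xbar hbar
  have hray := l2_smul_eq_smul_of_l2_add_eq (hsol.l2_add_residual_eq hlam.le hbar)
  have hu : l2 (A *ᵥ xhat - b) ≠ 0 := l2_ne_zero (sub_ne_zero.mpr hres)
  rw [← neg_sub (A *ᵥ xbar), ← neg_sub (A *ᵥ xhat), smul_comm, eq_inv_smul_iff₀ hu,
    smul_neg, smul_neg, hray]
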